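/- arXiv:2504.16042 — 12 statements merged into one kernel-verified Lean document; each statement's English description precedes it below -/
import Mathlib

section
/- Let A ∈ [0,1]^{n×m} and b ∈ [0,1]^n, and let e ∈ [0,1]^m be defined by e_j = min over i of (a_{ij} →_G b_i), where x →_G y = 1 if x ≤ y and y otherwise. Then e is an upper bound for every solution of the system: if v ∈ [0,1]^m satisfies max_j min(a_{ij}, v_j) = b_i for all i, then v_j ≤ e_j for all j. -/
open Finset

noncomputable def sigmaG (x y z : ℝ) : ℝ := min (max (x - z) 0 / 2) (max (y - z) 0)

noncomputable def maxminProd {n m : ℕ} [NeZero m] (T : Fin n → Fin m → ℝ)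
    (x : Fin m → ℝ) (i : Fin n) : ℝ :=
  Finset.univ.sup' Finset.univ_nonempty (fun j => min (T i j) (x j))

def IsConsistent {n m : ℕ} [NeZero m] (T : Fin n → Fin m → ℝ) (b : Fin n → ℝ) : Prop :=
  ∃ x : Fin m → ℝ, (∀ j, x j ∈ Set.Icc (0:ℝ) 1) ∧ ∀ i, maxminProd T x i = b i

def TSet {n m : ℕ} [NeZero m] (b : Fin n → ℝ) : Set (Fin n → Fin m → ℝ) :=
  {T | (∀ i j, T i j ∈ Set.Icc (0:ℝ) 1) ∧ IsConsistent T b}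

noncomputable def normInf {n m : ℕ} [NeZero n] [NeZero m] (X Y : Fin n → Fin m → ℝ) : ℝ :=
  Finset.univ.sup' Finset.univ_nonempty (fun p : Fin n × Fin m => |X p.1 p.2 - Y p.1 p.2|)

noncomputable def deltaE {n m : ℕ} [NeZero n] (b : Fin n → ℝ)
    (T : Fin n → Fin m → ℝ) (s : Fin n) (l : Fin m) : ℝ :=
  max (max (b s - T s l) 0)
    (Finset.univ.sup' Finset.univ_nonempty (fun k => sigmaG (b s) (T k l) (b k)))

noncomputable def deltaRow {n m : ℕ} [NeZero n] [NeZero m] (b : Fin n → ℝ)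
    (T : Fin n → Fin m → ℝ) (s : Fin n) : ℝ :=
  Finset.univ.inf' Finset.univ_nonempty (fun l => deltaE b T s l)

noncomputable def fmod {n m : ℕ} (b : Fin n → ℝ) (M : Fin n → Fin m → ℝ)
    (i : Fin n) (j : Fin m) : Fin n → Fin m → ℝ :=
  fun k l => if l = j then
      (if k = i then max (b i) (M i j)
       else if 0 < sigmaG (b i) (M k j) (b k) then b k else M k j)
    else M k l

noncomputable def applyMods {n m h : ℕ} (b : Fin n → ℝ) (A : Fin n → Fin m → ℝ)
    (vi : Fin h → Fin n) (vj : Fin h → Fin m) : Fin n → Fin m → ℝ :=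
  (List.finRange h).foldl (fun M lam => fmod b M (vi lam) (vj lam)) A


theorem stmt2 {n m : ℕ} [NeZero n] [NeZero m]
    (A : Fin n → Fin m → ℝ) (b : Fin n → ℝ)
    (hA : ∀ i j, A i j ∈ Set.Icc (0:ℝ) 1) (hb : ∀ i, b i ∈ Set.Icc (0:ℝ) 1)
    (e : Fin m → ℝ)
    (he : ∀ j, e j = Finset.univ.inf' Finset.univ_nonempty
        (fun i => if A i j ≤ b i then (1:ℝ) else b i))
    (v : Fin m → ℝ) (hv : ∀ j, v j ∈ Set.Icc (0:ℝ) 1)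
    (hsol : ∀ i, maxminProd A v i = b i) :
    ∀ j, v j ≤ e j := by
  intro j
  rw [he j, Finset.le_inf'_iff]
  intro i _
  by_cases h : A i j ≤ b i
  · simp [h, (hv j).2]
  · simp only [h, if_false]
    push_neg at h
    have hle : min (A i j) (v j) ≤ b i := by
      rw [← hsol i, maxminProd]
      exact Finset.le_sup' (fun j => min (A i j) (v j)) (Finset.mem_univ j)
    rcases le_total (A i j) (v j) with hc | hc
    · linarith [min_eq_left hc ▸ hle]
    · rwa [min_eq_right hc] at hle
end

section
/- Sanchez's criterion: the max-min system A □ x = b (with A ∈ [0,1]^{n×m}, b ∈ [0,1]^n) is consistent (has a solution x ∈ [0,1]^m) if and only if e = A^t □_{→_G}^{min} b, defined by e_j = min_i(a_{ij} →_G b_i), satisfies A □ e = b. -/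
open Finset

theorem stmt4 {n m : ℕ} [NeZero n] [NeZero m]
    (A : Fin n → Fin m → ℝ) (b : Fin n → ℝ)
    (hA : ∀ i j, A i j ∈ Set.Icc (0:ℝ) 1) (hb : ∀ i, b i ∈ Set.Icc (0:ℝ) 1)
    (e : Fin m → ℝ)
    (he : ∀ j, e j = Finset.univ.inf' Finset.univ_nonempty
        (fun i => if A i j ≤ b i then (1:ℝ) else b i)) :
    IsConsistent A b ↔ ∀ i, maxminProd A e i = b i := by
  constructor
  · rintro ⟨x, hx, hsol⟩ i
    have hxe : ∀ j, x j ≤ e j := by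
      intro j
      rw [he]
      apply Finset.le_inf'
      intro i' _
      split_ifs with h
      · exact (hx j).2
      · push_neg at h
        have hle : min (A i' j) (x j) ≤ b i' := by
          rw [← hsol i', maxminProd]
          exact Finset.le_sup' (fun j => min (A i' j) (x j)) (Finset.mem_univ j)
        rcases le_or_gt (x j) (b i') with h' | h'
        · exact h'
        · exact absurd hle (not_le.mpr (lt_min h h'))
    have h1 : maxminProd A e i ≤ b i := by
      apply Finset.sup'_le
      intro j _
      have hej : e j ≤ if A i j ≤ b i then (1:ℝ) else b i := by
        rw [he]; exact Finset.inf'_le _ (Finset.mem_univ i)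
      split_ifs at hej with h
      · exact le_trans (min_le_left _ _) h
      · exact le_trans (min_le_right _ _) hej
    have h2 : b i ≤ maxminProd A e i := by
      rw [← hsol i]
      simp only [maxminProd]
      apply Finset.sup'_le
      intro j _
      exact le_trans (min_le_min le_rfl (hxe j))
        (Finset.le_sup' (fun j => min (A i j) (e j)) (Finset.mem_univ j))
    linarith
  · intro h
    refine ⟨e, ?_, h⟩
    intro j
    rw [he]
    constructor
    · apply Finset.le_inf'
      intro i _
      split_ifs with hi
      · norm_num
      · exact (hb i).1
    · obtain ⟨i0⟩ : Nonempty (Fin n) := inferInstance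
      refine le_trans (Finset.inf'_le _ (Finset.mem_univ i0)) ?_
      split_ifs with hi
      · exact le_rfl
      · exact (hb i0).2
end

section
/- Fix A ∈ [0,1]^{n×m}, b ∈ [0,1]^n. The set 𝒯 of matrices T ∈ [0,1]^{n×m} for which the max-min system T □ x = b is consistent is nonempty, and the infimum over T ∈ 𝒯 of ‖T − A‖_∞ (sup of absolute entrywise differences) is attained, i.e., there exists T* ∈ 𝒯 with ‖T* − A‖_∞ = inf_{T∈𝒯} ‖T − A‖_∞. -/
open Finset

/-! 𝒯 is the projection to the first factor of the set of pairs `(T, x) ∈ [0,1]^{n×m} × [0,1]^m`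
with `T □ x = b`, which is compact because `□` is continuous; hence the continuous function
`T ↦ ‖T - A‖_∞` attains its infimum on 𝒯. The matrix `T i j = b i` with `x = 1` lies in 𝒯. -/

section

variable {n m : ℕ} [NeZero m]

lemma continuous_maxminProd_apply (i : Fin n) :
    Continuous fun p : (Fin n → Fin m → ℝ) × (Fin m → ℝ) => maxminProd p.1 p.2 i :=
  Continuous.finset_sup'_apply _ fun j _ => by fun_prop

lemma TSet_eq_image_fst (b : Fin n → ℝ) :
    TSet (m := m) b = Prod.fst ''
      ((Set.univ.pi fun _ => Set.univ.pi fun _ => Set.Icc 0 1) ×ˢ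
          (Set.univ.pi fun _ => Set.Icc 0 1) ∩
        {p | ∀ i, maxminProd p.1 p.2 i = b i}) := by
  ext T
  constructor
  · rintro ⟨hT, x, hx, hTx⟩
    exact ⟨(T, x), ⟨⟨fun i _ j _ => hT i j, fun j _ => hx j⟩, hTx⟩, rfl⟩
  · rintro ⟨⟨T, x⟩, ⟨⟨hT, hx⟩, hTx⟩, rfl⟩
    exact ⟨fun i j => hT i trivial j trivial, x, fun j => hx j trivial, hTx⟩

lemma isCompact_TSet (b : Fin n → ℝ) : IsCompact (TSet (m := m) b) := by
  rw [TSet_eq_image_fst]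
  refine IsCompact.image (IsCompact.inter_right ?_ ?_) continuous_fst
  · exact (isCompact_univ_pi fun _ => isCompact_univ_pi fun _ => isCompact_Icc).prod
      (isCompact_univ_pi fun _ => isCompact_Icc)
  · simp only [Set.ofPred_forall]
    exact isClosed_iInter fun i => isClosed_eq (continuous_maxminProd_apply i) continuous_const

lemma TSet_nonempty {b : Fin n → ℝ} (hb : ∀ i, b i ∈ Set.Icc (0:ℝ) 1) :
    (TSet (m := m) b).Nonempty :=
  ⟨fun i _ => b i, fun i _ => hb i, fun _ => 1, fun _ => ⟨zero_le_one, le_rfl⟩, fun i => by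
    simp only [maxminProd, min_eq_left (hb i).2, Finset.sup'_const]⟩

lemma continuous_normInf_left [NeZero n] (A : Fin n → Fin m → ℝ) :
    Continuous fun T : Fin n → Fin m → ℝ => normInf T A :=
  Continuous.finset_sup'_apply _ fun p _ => by fun_prop

end

theorem stmt6_general {n m : ℕ} [NeZero n] [NeZero m]
    (A : Fin n → Fin m → ℝ) (b : Fin n → ℝ)
    (hb : ∀ i, b i ∈ Set.Icc (0:ℝ) 1) :
    (TSet (n := n) (m := m) b).Nonempty ∧
      ∃ Tstar ∈ TSet (n := n) (m := m) b,
        normInf Tstar A = sInf ((fun T => normInf T A) '' TSet (n := n) (m := m) b) := by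
  have hne := TSet_nonempty (m := m) hb
  exact ⟨hne, ((isCompact_TSet b).image (continuous_normInf_left A)).sInf_mem (hne.image _)⟩

theorem stmt6 {n m : ℕ} [NeZero n] [NeZero m]
    (A : Fin n → Fin m → ℝ) (b : Fin n → ℝ)
    (hA : ∀ i j, A i j ∈ Set.Icc (0:ℝ) 1) (hb : ∀ i, b i ∈ Set.Icc (0:ℝ) 1) :
    (TSet (n := n) (m := m) b).Nonempty ∧
      ∃ Tstar ∈ TSet (n := n) (m := m) b,
        normInf Tstar A = sInf ((fun T => normInf T A) '' TSet (n := n) (m := m) b) :=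
  stmt6_general A b hb
end

section
/- Let A ∈ [0,1]^{n×m}, b ∈ [0,1]^n, and (i,j) a fixed pair of indices. Define U^A_{ij} = {k : σ_G(b_i, a_{kj}, b_k) > 0} and the matrix A^{(i,j)} by: a^{(i,j)}_{ij} = max(b_i, a_{ij}); for k ≠ i, a^{(i,j)}_{kj} = b_k if k ∈ U^A_{ij} and a_{kj} otherwise; all other columns unchanged. Then δ^{A^{(i,j)}}(i,j) = 0, where δ^T(s,l) = max[(b_s − t_{sl})⁺, max_k σ_G(b_s, t_{kl}, b_k)]. -/
open Finset

lemma sigmaG_nonneg (x y z : ℝ) : 0 ≤ sigmaG x y z :=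
  le_min (by positivity) (le_max_right _ _)

theorem stmt8 {n m : ℕ} [NeZero n]
    (A : Fin n → Fin m → ℝ) (b : Fin n → ℝ)
    (hA : ∀ i j, A i j ∈ Set.Icc (0:ℝ) 1) (hb : ∀ i, b i ∈ Set.Icc (0:ℝ) 1)
    (i : Fin n) (j : Fin m) :
    deltaE b (fmod b A i j) i j = 0 := by
  have hzero : ∀ k, sigmaG (b i) (fmod b A i j k j) (b k) = 0 := by
    intro k
    simp only [fmod, if_pos rfl]
    by_cases hk : k = i
    · subst hk
      simp [sigmaG]
    · rw [if_neg hk]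
      by_cases hσ : 0 < sigmaG (b i) (A k j) (b k)
      · rw [if_pos hσ]
        simp [sigmaG]; positivity
      · rw [if_neg hσ]
        exact le_antisymm (not_lt.mp hσ) (sigmaG_nonneg _ _ _)
  have hTii : b i ≤ fmod b A i j i j := by
    simp [fmod]
  unfold deltaE
  rw [max_eq_right, Finset.sup'_eq_of_forall _ _ (fun k _ => hzero k)]
  · rw [Finset.sup'_eq_of_forall _ _ (fun k _ => hzero k)]
    exact max_le (by linarith) le_rfl
end

section
/- With A^{(i,j)} as above, if δ^A(s,j) = 0 for some row index s, then δ^{A^{(i,j)}}(s,j) = 0. -/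
open Finset

lemma sigmaG_le_zero_iff (x y z : ℝ) : sigmaG x y z ≤ 0 ↔ x ≤ z ∨ y ≤ z := by
  unfold sigmaG
  rw [min_le_iff]
  constructor
  · rintro (h | h)
    · left
      by_contra hx
      push_neg at hx
      rw [max_eq_left (by linarith : (0:ℝ) ≤ x - z)] at h
      linarith
    · right
      by_contra hy
      push_neg at hy
      rw [max_eq_left (by linarith : (0:ℝ) ≤ y - z)] at h
      linarith
  · rintro (h | h)
    · left; rw [max_eq_right (by linarith)]; norm_num
    · right; rw [max_eq_right (by linarith)]

theorem stmt10 {n m : ℕ} [NeZero n]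
    (A : Fin n → Fin m → ℝ) (b : Fin n → ℝ)
    (hA : ∀ i j, A i j ∈ Set.Icc (0:ℝ) 1) (hb : ∀ i, b i ∈ Set.Icc (0:ℝ) 1)
    (i : Fin n) (j : Fin m) (s : Fin n)
    (hs : deltaE b A s j = 0) :
    deltaE b (fmod b A i j) s j = 0 := by
  unfold deltaE at hs
  have hX : max (b s - A s j) 0 ≤ 0 := le_of_le_of_eq (le_max_left _ _) hs
  have h1 : b s ≤ A s j := by
    have := le_trans (le_max_left _ _) hX; linarith
  have hY : ∀ k, sigmaG (b s) (A k j) (b k) ≤ 0 := fun k =>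
    le_trans (Finset.le_sup' (fun k => sigmaG (b s) (A k j) (b k)) (Finset.mem_univ k))
      (le_of_le_of_eq (le_max_right _ _) hs)
  have h2 : ∀ k, b s ≤ b k ∨ A k j ≤ b k := fun k =>
    (sigmaG_le_zero_iff _ _ _).mp (hY k)
  apply le_antisymm
  · unfold deltaE
    apply max_le
    · apply max_le _ le_rfl
      have hb1 : b s ≤ fmod b A i j s j := by
        by_cases hsi : s = i
        · subst hsi
          simp only [fmod, if_pos rfl]
          exact le_max_left _ _
        · simp only [fmod, if_pos rfl, if_neg hsi]
          split_ifs <;> first | exact le_rfl | exact h1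
      linarith
    · apply Finset.sup'_le
      intro k _
      rw [sigmaG_le_zero_iff]
      by_cases hki : k = i
      · subst hki
        simp only [fmod, if_pos rfl]
        rcases h2 k with h | h
        · exact Or.inl h
        · exact Or.inr (max_le (le_rfl) h)
      · simp only [fmod, if_pos rfl, if_neg hki]
        split_ifs <;> first | exact Or.inr le_rfl | exact h2 k
  · exact le_trans (le_max_right _ _) (le_max_left _ _)
end

section
/- The L∞ distance between A^{(i,j)} and A equals max[(b_i − a_{ij})⁺, max over k ≠ i of θ(i,k)·(a_{kj} − b_k)⁺], where θ(i,k) = 1 if b_i > b_k and 0 otherwise. -/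
open Finset

lemma sigmaG_pos_iff (x y z : ℝ) : 0 < sigmaG x y z ↔ z < x ∧ z < y := by
  unfold sigmaG
  rw [lt_min_iff]
  simp [lt_max_iff, sub_pos, div_pos_iff]

theorem stmt11 {n m : ℕ} [NeZero n] [NeZero m]
    (A : Fin n → Fin m → ℝ) (b : Fin n → ℝ)
    (hA : ∀ i j, A i j ∈ Set.Icc (0:ℝ) 1) (hb : ∀ i, b i ∈ Set.Icc (0:ℝ) 1)
    (i : Fin n) (j : Fin m) :
    normInf (fmod b A i j) A =
      max (max (b i - A i j) 0)
        (Finset.univ.sup' Finset.univ_nonempty (fun k =>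
          if k ≠ i then (if b i > b k then (1:ℝ) else 0) * max (A k j - b k) 0
          else 0)) := by
  have hR0 : (0:ℝ) ≤ max (max (b i - A i j) 0)
        (Finset.univ.sup' Finset.univ_nonempty (fun k =>
          if k ≠ i then (if b i > b k then (1:ℝ) else 0) * max (A k j - b k) 0
          else 0)) := le_trans (le_max_right _ _) (le_max_left _ _)
  have hdiag : |fmod b A i j i j - A i j| = max (b i - A i j) 0 := by
    simp only [fmod, if_pos rfl]
    rw [abs_of_nonneg (by simp [le_max_right])]
    rcases le_total (b i) (A i j) with h | h
    · simp [max_eq_right h, sub_nonpos.mpr h]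
    · simp [max_eq_left h, h]
  unfold normInf
  apply le_antisymm
  · apply Finset.sup'_le
    rintro ⟨k, l⟩ -
    by_cases hl : l = j
    · rw [hl]
      by_cases hk : k = i
      · rw [hk, hdiag]; exact le_max_left _ _
      · simp only [fmod, if_pos rfl, if_neg hk]
        by_cases hs : 0 < sigmaG (b i) (A k j) (b k)
        · simp only [hs, if_true]
          obtain ⟨h1, h2⟩ := (sigmaG_pos_iff _ _ _).mp hs
          rw [abs_of_nonpos (by linarith), neg_sub]
          refine le_trans ?_ (le_max_right _ _)
          refine le_trans ?_ (Finset.le_sup' _ (Finset.mem_univ k))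
          rw [if_pos hk, if_pos h1, one_mul]
          exact le_max_left _ _
        · rw [if_neg hs]; simpa using hR0
    · simp only [fmod, if_neg hl]; simpa using hR0
  · have hN0 : (0:ℝ) ≤ Finset.univ.sup' Finset.univ_nonempty
        (fun p : Fin n × Fin m => |fmod b A i j p.1 p.2 - A p.1 p.2|) :=
      le_trans (abs_nonneg _)
        (Finset.le_sup' (fun p : Fin n × Fin m => |fmod b A i j p.1 p.2 - A p.1 p.2|)
          (Finset.mem_univ (i, j)))
    apply max_le
    · rw [← hdiag]
      exact Finset.le_sup' (fun p : Fin n × Fin m => |fmod b A i j p.1 p.2 - A p.1 p.2|)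
        (Finset.mem_univ (i, j))
    · apply Finset.sup'_le
      intro k _
      by_cases hk : k ≠ i
      · rw [if_pos hk]
        by_cases h1 : b i > b k
        · rw [if_pos h1, one_mul]
          by_cases h2 : b k < A k j
          · have hs : 0 < sigmaG (b i) (A k j) (b k) := (sigmaG_pos_iff _ _ _).mpr ⟨h1, h2⟩
            refine le_trans ?_ (Finset.le_sup'
              (fun p : Fin n × Fin m => |fmod b A i j p.1 p.2 - A p.1 p.2|)
              (Finset.mem_univ (k, j)))
            simp only [fmod, if_pos rfl, if_neg hk, hs, if_true]
            rw [abs_of_nonpos (by linarith), neg_sub]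
            exact max_le le_rfl (by linarith)
          · push_neg at h2
            rw [max_eq_right (sub_nonpos.mpr h2)]
            exact hN0
        · rw [if_neg h1, zero_mul]; exact hN0
      · rw [if_neg hk]; exact hN0
end

section
/- Domination lemma: let T ∈ [0,1]^{n×m} satisfy δ^T(i,j) = 0 for a fixed pair (i,j). Then for every pair (k,l), |a^{(i,j)}_{kl} − a_{kl}| ≤ |t_{kl} − a_{kl}|. In particular ‖A^{(i,j)} − A‖_∞ ≤ ‖T − A‖_∞. -/
open Finset

theorem stmt12 {n m : ℕ} [NeZero n] [NeZero m]
    (A T : Fin n → Fin m → ℝ) (b : Fin n → ℝ)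
    (hA : ∀ i j, A i j ∈ Set.Icc (0:ℝ) 1) (hb : ∀ i, b i ∈ Set.Icc (0:ℝ) 1)
    (hT : ∀ i j, T i j ∈ Set.Icc (0:ℝ) 1)
    (i : Fin n) (j : Fin m) (hTij : deltaE b T i j = 0) :
    (∀ k l, |fmod b A i j k l - A k l| ≤ |T k l - A k l|) ∧
      normInf (fmod b A i j) A ≤ normInf T A := by
  have hmax : max (max (b i - T i j) 0)
      (Finset.univ.sup' Finset.univ_nonempty (fun k => sigmaG (b i) (T k j) (b k))) ≤ 0 :=
    le_of_eq hTij
  have h1 : b i ≤ T i j := by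
    have h := le_trans (le_max_left _ _) (le_trans (le_max_left _ _) hmax)
    linarith
  have h2 : ∀ k, sigmaG (b i) (T k j) (b k) ≤ 0 := fun k =>
    le_trans (Finset.le_sup' (fun k => sigmaG (b i) (T k j) (b k)) (Finset.mem_univ k)) (le_trans (le_max_right _ _) hmax)
  have key : ∀ k l, |fmod b A i j k l - A k l| ≤ |T k l - A k l| := by
    intro k l
    unfold fmod
    by_cases hl : l = j
    · subst hl
      by_cases hk : k = i
      · subst hk
        simp only [if_pos rfl, eq_self_iff_true, if_true]
        rcases le_or_gt (b k) (A k l) with h | h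
        · simp [max_eq_right h]
        · rw [max_eq_left h.le, abs_of_pos (by linarith), abs_of_pos (by linarith)]
          linarith
      · simp only [if_pos rfl, if_neg hk, eq_self_iff_true, if_true]
        by_cases hs : 0 < sigmaG (b i) (A k l) (b k)
        · rw [if_pos hs]
          have hs' := lt_min_iff.mp hs
          have hx : b k < b i := by
            have h := hs'.1
            by_contra h'; push_neg at h'
            rw [max_eq_right (by linarith)] at h; linarith
          have hy : b k < A k l := by
            have h := hs'.2
            by_contra h'; push_neg at h'
            rw [max_eq_right (by linarith)] at h; linarith
          have hT' : T k l ≤ b k := by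
            have h := h2 k
            unfold sigmaG at h
            rcases min_le_iff.mp h with h | h
            · exfalso
              rw [max_eq_left (by linarith)] at h; linarith
            · by_contra h'; push_neg at h'
              rw [max_eq_left (by linarith)] at h; linarith
          rw [abs_of_neg (by linarith), abs_of_neg (by linarith)]
          linarith
        · rw [if_neg hs]; simp
    · simp [hl]
  refine ⟨key, ?_⟩
  unfold normInf
  apply Finset.sup'_le
  intro p _
  exact le_trans (key p.1 p.2)
    (Finset.le_sup' (fun p : Fin n × Fin m => |T p.1 p.2 - A p.1 p.2|) (Finset.mem_univ p))
end

section
/- Commutativity of elementary modifications: for i₁ ≠ i₂ and any column indices j₁, j₂, applying the modification at (i₁,j₁) and then at (i₂,j₂) to the matrix A yields the same matrix as applying them in the reverse order: (A^{(i₁,j₁)})^{(i₂,j₂)} = (A^{(i₂,j₂)})^{(i₁,j₁)}. -/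
open Finset

lemma sigmaG_pos {x y z : ℝ} : 0 < sigmaG x y z ↔ z < x ∧ z < y := by
  unfold sigmaG
  rw [lt_min_iff]
  constructor
  · rintro ⟨h1, h2⟩
    refine ⟨?_, ?_⟩
    · rcases lt_max_iff.mp (by linarith : (0:ℝ) < max (x - z) 0) with h | h <;> linarith
    · rcases lt_max_iff.mp h2 with h | h <;> linarith
  · rintro ⟨h1, h2⟩
    have hx := le_max_left (x - z) 0
    have hy := le_max_left (y - z) 0
    constructor <;> linarith

lemma key1 (p q a : ℝ) :
    max q (if q < p ∧ q < a then q else a)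
      = if q < p ∧ q < max q a then q else max q a := by
  by_cases h : q < p ∧ q < a
  · rw [if_pos h, if_pos ⟨h.1, lt_max_of_lt_right h.2⟩, max_self]
  · rw [if_neg h, if_neg]
    rintro ⟨h1, h2⟩
    exact h ⟨h1, (lt_max_iff.mp h2).resolve_left (lt_irrefl q)⟩

lemma key2 (p q c a : ℝ) :
    (if c < q ∧ c < (if c < p ∧ c < a then c else a) then c
      else (if c < p ∧ c < a then c else a))
    = (if c < p ∧ c < (if c < q ∧ c < a then c else a) then c
      else (if c < q ∧ c < a then c else a)) := by
  have hc : ∀ r : ℝ, ¬(c < r ∧ c < c) := fun r h => lt_irrefl c h.2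
  by_cases hp : c < p ∧ c < a
  · rw [if_pos hp, if_neg (hc q)]
    by_cases hq : c < q ∧ c < a
    · rw [if_pos hq, if_neg (hc p)]
    · rw [if_neg hq, if_pos hp]
  · rw [if_neg hp]
    by_cases hq : c < q ∧ c < a
    · rw [if_pos hq, if_neg (hc p)]
    · rw [if_neg hq, if_neg hp]

theorem stmt13 {n m : ℕ}
    (A : Fin n → Fin m → ℝ) (b : Fin n → ℝ)
    (hA : ∀ i j, A i j ∈ Set.Icc (0:ℝ) 1) (hb : ∀ i, b i ∈ Set.Icc (0:ℝ) 1)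
    (i₁ i₂ : Fin n) (hne : i₁ ≠ i₂) (j₁ j₂ : Fin m) :
    fmod b (fmod b A i₁ j₁) i₂ j₂ = fmod b (fmod b A i₂ j₂) i₁ j₁ := by
  have hne' : i₂ ≠ i₁ := hne.symm
  funext k l
  by_cases h12 : j₁ = j₂
  · subst h12
    by_cases hl : l = j₁
    · subst hl
      simp only [fmod, if_pos rfl, sigmaG_pos, if_neg hne, if_neg hne']
      by_cases hk1 : k = i₁ <;> by_cases hk2 : k = i₂
      · exact absurd (hk1.symm.trans hk2) hne
      · simp only [hk1, if_pos rfl, if_neg hne, if_neg hne']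
        exact (key1 (b i₂) (b i₁) (A i₁ l)).symm
      · simp only [hk2, if_pos rfl, if_neg hne, if_neg hne']
        exact key1 (b i₁) (b i₂) (A i₂ l)
      · simp only [if_neg hk1, if_neg hk2]
        exact key2 (b i₁) (b i₂) (b k) (A k l)
    · simp only [fmod, if_neg hl]
  · by_cases hl1 : l = j₁ <;> by_cases hl2 : l = j₂
    · exact absurd (hl1.symm.trans hl2) h12
    · simp [fmod, hl1, hl2, h12]
    · simp [fmod, hl1, hl2, Ne.symm h12]
    · simp [fmod, hl1, hl2]
end

section
/- Closed form for iterated modifications: given pairwise distinct rows i₁,…,i_h and columns j₁,…,j_h, define ℰ = ℰ₁ ∪ ℰ₂ where ℰ₁ = {(i_λ, j_λ) : b_{i_λ} > a_{i_λ j_λ}} and ℰ₂ = {(k, j_λ) : σ_G(b_{i_λ}, a_{k j_λ}, b_k) > 0}. Then the matrix obtained by successively applying the elementary modifications at (i₁,j₁),…,(i_h,j_h) to A has entry b_k at every (k,l) ∈ ℰ and entry a_{kl} at every (k,l) ∉ ℰ. -/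
open Finset

def ESet {n m h : ℕ} (A : Fin n → Fin m → ℝ) (b : Fin n → ℝ)
    (vi : Fin h → Fin n) (vj : Fin h → Fin m) (s : Fin h → Prop)
    (k : Fin n) (l : Fin m) : Prop :=
  (∃ lam, s lam ∧ k = vi lam ∧ l = vj lam ∧ b (vi lam) > A (vi lam) (vj lam)) ∨
  (∃ lam, s lam ∧ l = vj lam ∧ 0 < sigmaG (b (vi lam)) (A k (vj lam)) (b k))

lemma ESet_congr {n m h : ℕ} (A : Fin n → Fin m → ℝ) (b : Fin n → ℝ)
    (vi : Fin h → Fin n) (vj : Fin h → Fin m) {s s' : Fin h → Prop}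
    (hs : ∀ u, s u ↔ s' u) (k : Fin n) (l : Fin m) :
    ESet A b vi vj s k l ↔ ESet A b vi vj s' k l := by
  unfold ESet
  constructor
  · rintro (⟨lam, h1, h2⟩ | ⟨lam, h1, h2⟩)
    · exact Or.inl ⟨lam, (hs lam).1 h1, h2⟩
    · exact Or.inr ⟨lam, (hs lam).1 h1, h2⟩
  · rintro (⟨lam, h1, h2⟩ | ⟨lam, h1, h2⟩)
    · exact Or.inl ⟨lam, (hs lam).2 h1, h2⟩
    · exact Or.inr ⟨lam, (hs lam).2 h1, h2⟩

lemma ESet_mono {n m h : ℕ} (A : Fin n → Fin m → ℝ) (b : Fin n → ℝ)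
    (vi : Fin h → Fin n) (vj : Fin h → Fin m) {s s' : Fin h → Prop}
    (hs : ∀ u, s u → s' u) {k : Fin n} {l : Fin m}
    (he : ESet A b vi vj s k l) : ESet A b vi vj s' k l := by
  rcases he with ⟨lam, h1, h2⟩ | ⟨lam, h1, h2⟩
  · exact Or.inl ⟨lam, hs lam h1, h2⟩
  · exact Or.inr ⟨lam, hs lam h1, h2⟩

def MChar14 {n m h : ℕ} (A : Fin n → Fin m → ℝ) (b : Fin n → ℝ)
    (vi : Fin h → Fin n) (vj : Fin h → Fin m) (s : Fin h → Prop)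
    (M : Fin n → Fin m → ℝ) : Prop :=
  ∀ k l, (ESet A b vi vj s k l → M k l = b k) ∧
    (¬ ESet A b vi vj s k l → M k l = A k l)

lemma char_step {n m h : ℕ} (A : Fin n → Fin m → ℝ) (b : Fin n → ℝ)
    (vi : Fin h → Fin n) (vj : Fin h → Fin m) (s : Fin h → Prop)
    (M : Fin n → Fin m → ℝ) (t : Fin h)
    (hM : MChar14 A b vi vj s M) :
    MChar14 A b vi vj (fun u => s u ∨ u = t) (fmod b M (vi t) (vj t)) := by
  intro k l
  set s' : Fin h → Prop := fun u => s u ∨ u = t with hs'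
  have hmono : ∀ u, s u → s' u := fun u hu => Or.inl hu
  unfold fmod
  by_cases hl : l = vj t
  · subst hl
    rw [if_pos rfl]
    by_cases hk : k = vi t
    · subst hk
      rw [if_pos rfl]
      by_cases he : ESet A b vi vj s (vi t) (vj t)
      · have hMb : M (vi t) (vj t) = b (vi t) := (hM (vi t) (vj t)).1 he
        rw [hMb, max_self]
        exact ⟨fun _ => rfl, fun hne => absurd (ESet_mono A b vi vj hmono he) hne⟩
      · have hMA : M (vi t) (vj t) = A (vi t) (vj t) := (hM (vi t) (vj t)).2 he
        rw [hMA]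
        by_cases hba : b (vi t) > A (vi t) (vj t)
        · rw [max_eq_left (le_of_lt hba)]
          refine ⟨fun _ => rfl, fun hne => absurd (Or.inl ⟨t, Or.inr rfl, rfl, rfl, hba⟩) hne⟩
        · push_neg at hba
          rw [max_eq_right hba]
          refine ⟨fun he' => ?_, fun _ => rfl⟩
          exfalso
          rcases he' with ⟨lam, hslam, hk', hl', hba'⟩ | ⟨lam, hslam, hl', hsig⟩
          · rcases hslam with hslam | rfl
            · exact he (Or.inl ⟨lam, hslam, hk', hl', hba'⟩)
            · rw [← hk', ← hl'] at hba'
              exact absurd hba' (not_lt.mpr hba)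
          · rcases hslam with hslam | rfl
            · exact he (Or.inr ⟨lam, hslam, hl', hsig⟩)
            · rw [← hl'] at hsig
              rw [sigmaG_pos_iff] at hsig
              exact lt_irrefl _ hsig.1
    · rw [if_neg hk]
      by_cases he : ESet A b vi vj s k (vj t)
      · have hMb : M k (vj t) = b k := (hM k (vj t)).1 he
        rw [hMb]
        have hns : ¬ 0 < sigmaG (b (vi t)) (b k) (b k) := by
          rw [sigmaG_pos_iff]; rintro ⟨_, hc⟩; exact lt_irrefl _ hc
        rw [if_neg hns]
        exact ⟨fun _ => rfl, fun hne => absurd (ESet_mono A b vi vj hmono he) hne⟩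
      · have hMA : M k (vj t) = A k (vj t) := (hM k (vj t)).2 he
        rw [hMA]
        by_cases hsig : 0 < sigmaG (b (vi t)) (A k (vj t)) (b k)
        · rw [if_pos hsig]
          refine ⟨fun _ => rfl, fun hne => absurd (Or.inr ⟨t, Or.inr rfl, rfl, hsig⟩) hne⟩
        · rw [if_neg hsig]
          refine ⟨fun he' => ?_, fun _ => rfl⟩
          exfalso
          rcases he' with ⟨lam, hslam, hk', hl', hba'⟩ | ⟨lam, hslam, hl', hsig'⟩
          · rcases hslam with hslam | rfl
            · exact he (Or.inl ⟨lam, hslam, hk', hl', hba'⟩)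
            · exact hk hk'
          · rcases hslam with hslam | rfl
            · exact he (Or.inr ⟨lam, hslam, hl', hsig'⟩)
            · rw [← hl'] at hsig'
              exact hsig hsig'
  · rw [if_neg hl]
    have hEiff : ESet A b vi vj s' k l ↔ ESet A b vi vj s k l := by
      constructor
      · rintro (⟨lam, hslam, hk', hl', hba'⟩ | ⟨lam, hslam, hl', hsig'⟩)
        · rcases hslam with hslam | rfl
          · exact Or.inl ⟨lam, hslam, hk', hl', hba'⟩
          · exact absurd hl' hl
        · rcases hslam with hslam | rfl
          · exact Or.inr ⟨lam, hslam, hl', hsig'⟩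
          · exact absurd hl' hl
      · exact ESet_mono A b vi vj hmono
    exact ⟨fun he => (hM k l).1 (hEiff.1 he),
      fun hne => (hM k l).2 (fun he => hne (hEiff.2 he))⟩

lemma char_foldl {n m h : ℕ} (A : Fin n → Fin m → ℝ) (b : Fin n → ℝ)
    (vi : Fin h → Fin n) (vj : Fin h → Fin m) :
    ∀ (L : List (Fin h)) (s : Fin h → Prop) (M : Fin n → Fin m → ℝ),
      MChar14 A b vi vj s M →
      MChar14 A b vi vj (fun u => s u ∨ u ∈ L)
        (L.foldl (fun M lam => fmod b M (vi lam) (vj lam)) M) := by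
  intro L
  induction L with
  | nil =>
    intro s M hM
    intro k l
    have : ∀ u : Fin h, (s u ∨ u ∈ ([] : List (Fin h))) ↔ s u := by
      intro u; simp
    constructor
    · intro he; exact (hM k l).1 ((ESet_congr A b vi vj this k l).1 he)
    · intro hne; exact (hM k l).2 (fun he => hne ((ESet_congr A b vi vj this k l).2 he))
  | cons a L ih =>
    intro s M hM
    have hstep := char_step A b vi vj s M a hM
    have hfold := ih (fun u => s u ∨ u = a) (fmod b M (vi a) (vj a)) hstep
    intro k l
    have hiff : ∀ u : Fin h, ((s u ∨ u = a) ∨ u ∈ L) ↔ (s u ∨ u ∈ a :: L) := by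
      intro u
      simp [List.mem_cons]
      tauto
    simp only [List.foldl_cons]
    constructor
    · intro he
      exact (hfold k l).1 ((ESet_congr A b vi vj hiff k l).2 he)
    · intro hne
      exact (hfold k l).2 (fun he => hne ((ESet_congr A b vi vj hiff k l).1 he))

theorem stmt14 {n m h : ℕ}
    (A : Fin n → Fin m → ℝ) (b : Fin n → ℝ)
    (hA : ∀ i j, A i j ∈ Set.Icc (0:ℝ) 1) (hb : ∀ i, b i ∈ Set.Icc (0:ℝ) 1)
    (vi : Fin h → Fin n) (vj : Fin h → Fin m) (hinj : Function.Injective vi) :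
    ∀ k l,
      (((∃ lam, k = vi lam ∧ l = vj lam ∧ b (vi lam) > A (vi lam) (vj lam)) ∨
          (∃ lam, l = vj lam ∧ 0 < sigmaG (b (vi lam)) (A k (vj lam)) (b k))) →
        applyMods b A vi vj k l = b k) ∧
      ((¬ ((∃ lam, k = vi lam ∧ l = vj lam ∧ b (vi lam) > A (vi lam) (vj lam)) ∨
          (∃ lam, l = vj lam ∧ 0 < sigmaG (b (vi lam)) (A k (vj lam)) (b k)))) →
        applyMods b A vi vj k l = A k l) := by
  have h0 : MChar14 A b vi vj (fun _ => False) A := by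
    intro k l
    constructor
    · rintro (⟨lam, hf, _⟩ | ⟨lam, hf, _⟩) <;> exact absurd hf (fun c => c)
    · intro _; rfl
  have hfold := char_foldl A b vi vj (List.finRange h) (fun _ => False) A h0
  intro k l
  have hiff : ∀ u : Fin h, (False ∨ u ∈ List.finRange h) ↔ True := by
    intro u; simp [List.mem_finRange]
  have htrue : ESet A b vi vj (fun _ => True) k l ↔
      ((∃ lam, k = vi lam ∧ l = vj lam ∧ b (vi lam) > A (vi lam) (vj lam)) ∨
        (∃ lam, l = vj lam ∧ 0 < sigmaG (b (vi lam)) (A k (vj lam)) (b k))) := by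
    unfold ESet
    simp
  constructor
  · intro he
    exact (hfold k l).1 ((ESet_congr A b vi vj hiff k l).2 ((htrue.2 he)))
  · intro hne
    exact (hfold k l).2 (fun he =>
      hne (htrue.1 ((ESet_congr A b vi vj hiff k l).1 he)))
end

section
/- L∞ norm of iterated modification: ‖A^{(→i,→j)} − A‖_∞ = max over λ = 1,…,h of ‖A^{(i_λ, j_λ)} − A‖_∞, where A^{(→i,→j)} is obtained by successively applying the elementary modifications at (i₁,j₁),…,(i_h,j_h) for pairwise distinct rows i₁,…,i_h. -/
open Finset

open Classical in
noncomputable def Gfun {n m h : ℕ} (b : Fin n → ℝ) (M : Fin n → Fin m → ℝ)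
    (vi : Fin h → Fin n) (vj : Fin h → Fin m) (L : List (Fin h)) :
    Fin n → Fin m → ℝ :=
  fun k l =>
    if ∃ lam ∈ L, vj lam = l ∧ b k < b (vi lam) ∧ b k < M k l then b k
    else if ∃ lam ∈ L, vi lam = k ∧ vj lam = l then max (b k) (M k l)
    else M k l

lemma foldl_eq_G {n m h : ℕ} (b : Fin n → ℝ) (vi : Fin h → Fin n) (vj : Fin h → Fin m) :
    ∀ (L : List (Fin h)) (M : Fin n → Fin m → ℝ),
    L.Pairwise (fun a c => vi a ≠ vi c) →
    (List.foldl (fun M lam => fmod b M (vi lam) (vj lam)) M L) = Gfun b M vi vj L := by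
  classical
  intro L
  induction L with
  | nil => intro M _; funext k l; simp [Gfun]
  | cons a L ih =>
    intro M hp
    rw [List.foldl_cons, ih _ hp.of_cons]
    funext k l
    simp only [Gfun, List.exists_mem_cons_iff]
    by_cases hR : l = vj a
    case neg =>
      have hM' : fmod b M (vi a) (vj a) k l = M k l := by
        simp [fmod, hR]
      have h1 : ¬ (vj a = l) := fun he => hR he.symm
      simp [hM', h1]
    case pos =>
      subst hR
      have hhead : ∀ lam ∈ L, vi a ≠ vi lam := (List.pairwise_cons.mp hp).1
      by_cases hS : k = vi a
      case pos =>
        subst hS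
        have hM' : fmod b M (vi a) (vj a) (vi a) (vj a)
            = max (b (vi a)) (M (vi a) (vj a)) := by
          simp [fmod]
        have hnoown : ¬ ∃ lam ∈ L, vi lam = vi a ∧ vj lam = vj a := by
          rintro ⟨lam, hmem, heq, -⟩
          exact hhead lam hmem heq.symm
        by_cases hCL : ∃ lam ∈ L, vj lam = vj a ∧ b (vi a) < b (vi lam)
            ∧ b (vi a) < M (vi a) (vj a)
        · simp [hM', hCL, lt_sup_iff]
        · simp [hM', hCL, hnoown, lt_sup_iff]
      case neg =>
        have hS' : ¬ (vi a = k) := fun he => hS he.symm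
        by_cases hP1 : b k < b (vi a)
        · by_cases hP2 : b k < M k (vj a)
          · have hM' : fmod b M (vi a) (vj a) k (vj a) = b k := by
              simp [fmod, hS, sigmaG_pos_iff, hP1, hP2]
            simp [hM', hP1, hP2]
          · have hM' : fmod b M (vi a) (vj a) k (vj a) = M k (vj a) := by
              simp [fmod, hS, sigmaG_pos_iff, hP2]
            simp [hM', hS', hP2]
        · have hM' : fmod b M (vi a) (vj a) k (vj a) = M k (vj a) := by
            simp [fmod, hS, sigmaG_pos_iff, hP1]
          simp [hM', hS', hP1]

theorem stmt16 {n m h : ℕ} [NeZero n] [NeZero m] [NeZero h]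
    (A : Fin n → Fin m → ℝ) (b : Fin n → ℝ)
    (hA : ∀ i j, A i j ∈ Set.Icc (0:ℝ) 1) (hb : ∀ i, b i ∈ Set.Icc (0:ℝ) 1)
    (vi : Fin h → Fin n) (vj : Fin h → Fin m) (hinj : Function.Injective vi) :
    normInf (applyMods b A vi vj) A =
      Finset.univ.sup' Finset.univ_nonempty
        (fun lam : Fin h => normInf (fmod b A (vi lam) (vj lam)) A) := by
  classical
  have hpw : (List.finRange h).Pairwise (fun a c => vi a ≠ vi c) :=
    (List.nodup_finRange h).imp (fun hne heq => hne (hinj heq))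
  have hApp : applyMods b A vi vj = Gfun b A vi vj (List.finRange h) :=
    foldl_eq_G b vi vj _ A hpw
  set F := Gfun b A vi vj (List.finRange h) with hF
  -- pointwise values of F
  have hle_pt : ∀ (lam : Fin h) (k : Fin n) (l : Fin m),
      |fmod b A (vi lam) (vj lam) k l - A k l| ≤ |F k l - A k l| := by
    intro lam k l
    by_cases hR : l = vj lam
    case neg =>
      have : fmod b A (vi lam) (vj lam) k l = A k l := by simp [fmod, hR]
      rw [this]; simp
    case pos =>
      subst hR
      by_cases hS : k = vi lam
      case pos =>
        subst hS
        have hv : fmod b A (vi lam) (vj lam) (vi lam) (vj lam)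
            = max (b (vi lam)) (A (vi lam) (vj lam)) := by simp [fmod]
        rw [hv]
        by_cases hLow : ∃ lam', vj lam' = vj lam ∧ b (vi lam) < b (vi lam')
            ∧ b (vi lam) < A (vi lam) (vj lam)
        · obtain ⟨la, -, -, hlt⟩ := hLow
          have : max (b (vi lam)) (A (vi lam) (vj lam)) = A (vi lam) (vj lam) :=
            max_eq_right (le_of_lt hlt)
          rw [this]; simp
        · have hFv : F (vi lam) (vj lam) = max (b (vi lam)) (A (vi lam) (vj lam)) := by
            rw [hF]
            simp only [Gfun, List.mem_finRange, true_and]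
            rw [if_neg (by simpa using hLow), if_pos ⟨lam, rfl, rfl⟩]
          rw [hFv]
      case neg =>
        by_cases hP : b k < b (vi lam) ∧ b k < A k (vj lam)
        · have hv : fmod b A (vi lam) (vj lam) k (vj lam) = b k := by
            simp [fmod, hS, sigmaG_pos_iff, hP.1, hP.2]
          have hFv : F k (vj lam) = b k := by
            rw [hF]
            simp only [Gfun, List.mem_finRange, true_and]
            rw [if_pos ⟨lam, rfl, hP⟩]
          rw [hv, hFv]
        · have hv : fmod b A (vi lam) (vj lam) k (vj lam) = A k (vj lam) := by
            simp [fmod, hS, sigmaG_pos_iff, hP]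
          rw [hv]; simp
  apply le_antisymm
  · rw [hApp]
    show Finset.univ.sup' Finset.univ_nonempty
        (fun p : Fin n × Fin m => |F p.1 p.2 - A p.1 p.2|) ≤ _
    apply Finset.sup'_le
    rintro ⟨k, l⟩ -
    by_cases hLow : ∃ lam, vj lam = l ∧ b k < b (vi lam) ∧ b k < A k l
    · obtain ⟨lam, hj, h1, h2⟩ := hLow
      have hFv : F k l = b k := by
        rw [hF]; simp only [Gfun, List.mem_finRange, true_and]
        rw [if_pos ⟨lam, hj, h1, h2⟩]
      have hS : ¬ k = vi lam := fun he => absurd h1 (by rw [he]; exact lt_irrefl _)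
      have hfv : fmod b A (vi lam) (vj lam) k l = b k := by
        subst hj
        simp [fmod, hS, sigmaG_pos_iff, h1, h2]
      have : |F k l - A k l| = |fmod b A (vi lam) (vj lam) k l - A k l| := by
        rw [hFv, hfv]
      rw [this]
      refine le_trans ?_ (Finset.le_sup' _ (Finset.mem_univ lam))
      exact Finset.le_sup' (fun p : Fin n × Fin m =>
        |fmod b A (vi lam) (vj lam) p.1 p.2 - A p.1 p.2|) (Finset.mem_univ (k, l))
    · by_cases hOwn : ∃ lam, vi lam = k ∧ vj lam = l
      · obtain ⟨lam, hik, hj⟩ := hOwn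
        have hFv : F k l = max (b k) (A k l) := by
          rw [hF]; simp only [Gfun, List.mem_finRange, true_and]
          rw [if_neg (by simpa using hLow), if_pos ⟨lam, hik, hj⟩]
        have hfv : fmod b A (vi lam) (vj lam) k l = max (b k) (A k l) := by
          subst hik; subst hj
          simp [fmod]
        have : |F k l - A k l| = |fmod b A (vi lam) (vj lam) k l - A k l| := by
          rw [hFv, hfv]
        rw [this]
        refine le_trans ?_ (Finset.le_sup' _ (Finset.mem_univ lam))
        exact Finset.le_sup' (fun p : Fin n × Fin m =>
          |fmod b A (vi lam) (vj lam) p.1 p.2 - A p.1 p.2|) (Finset.mem_univ (k, l))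
      · have hFv : F k l = A k l := by
          rw [hF]; simp only [Gfun, List.mem_finRange, true_and]
          rw [if_neg (by simpa using hLow), if_neg (by simpa using hOwn)]
        rw [hFv]
        simp only [sub_self, abs_zero]
        obtain ⟨lam0, -⟩ := (Finset.univ_nonempty (α := Fin h)).exists_mem
        refine le_trans ?_ (Finset.le_sup' _ (Finset.mem_univ lam0))
        refine le_trans (abs_nonneg (fmod b A (vi lam0) (vj lam0) k l - A k l)) ?_
        exact Finset.le_sup' (fun p : Fin n × Fin m =>
          |fmod b A (vi lam0) (vj lam0) p.1 p.2 - A p.1 p.2|) (Finset.mem_univ (k, l))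
  · apply Finset.sup'_le
    intro lam _
    unfold normInf
    apply Finset.sup'_le
    rintro ⟨k, l⟩ -
    refine le_trans (hle_pt lam k l) ?_
    rw [hApp]
    exact Finset.le_sup' (fun p : Fin n × Fin m => |F p.1 p.2 - A p.1 p.2|)
      (Finset.mem_univ (k, l))
end

section
/- Consistency theorem: let N_inc = {i : δ^A_i > 0} where δ^A_i = min_j max[(b_i − a_{ij})⁺, max_k σ_G(b_i, a_{kj}, b_k)], let i₁,…,i_h be an enumeration of N_inc, and let j₁,…,j_h be arbitrary column indices. Then the max-min system A^{(→i,→j)} □ x = b is consistent, where A^{(→i,→j)} is the matrix obtained by successively applying the elementary modifications at (i₁,j₁),…,(i_h,j_h) to A. -/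
open Finset

def Pprop {n m : ℕ} (b : Fin n → ℝ) (M : Fin n → Fin m → ℝ) (i : Fin n) (j : Fin m) : Prop :=
  b i ≤ M i j ∧ ∀ k, M k j ≤ b k ∨ b i ≤ b k

lemma sigmaG_nonpos_cases {x y z : ℝ} (hs : ¬ 0 < sigmaG x y z) : x ≤ z ∨ y ≤ z := by
  push_neg at hs
  unfold sigmaG at hs
  rcases min_le_iff.mp hs with h | h
  · left
    by_contra hc; push_neg at hc
    have h1 : (x - z)/2 ≤ max (x - z) 0 / 2 := by
      have := le_max_left (x - z) 0; linarith
    linarith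
  · right
    by_contra hc; push_neg at hc
    have := le_max_left (y - z) 0; linarith

lemma Pprop_fmod {n m : ℕ} (b : Fin n → ℝ) (M : Fin n → Fin m → ℝ)
    {i : Fin n} {j : Fin m} (hP : Pprop b M i j) (i' : Fin n) (j' : Fin m) :
    Pprop b (fmod b M i' j') i j := by
  obtain ⟨h1, h2⟩ := hP
  by_cases hj : j = j'
  · subst hj
    constructor
    · simp only [fmod, if_pos rfl]
      by_cases hi : i = i'
      · subst hi
        simp only [if_pos rfl]
        exact le_max_of_le_right h1
      · simp only [if_neg hi]
        by_cases hs : 0 < sigmaG (b i') (M i j) (b i)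
        · simp [if_pos hs]
        · simp only [if_neg hs]; exact h1
    · intro k
      simp only [fmod, if_pos rfl]
      by_cases hk : k = i'
      · subst hk
        simp only [if_pos rfl]
        rcases h2 k with hc | hc
        · left; exact max_le (le_refl _) hc
        · right; exact hc
      · simp only [if_neg hk]
        by_cases hs : 0 < sigmaG (b i') (M k j) (b k)
        · simp only [if_pos hs]; left; exact le_refl _
        · simp only [if_neg hs]; exact h2 k
  · constructor
    · simpa only [fmod, if_neg hj] using h1
    · intro k; simpa only [fmod, if_neg hj] using h2 k

lemma Pprop_fmod_self {n m : ℕ} (b : Fin n → ℝ) (M : Fin n → Fin m → ℝ)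
    (i : Fin n) (j : Fin m) : Pprop b (fmod b M i j) i j := by
  constructor
  · simp only [fmod, if_pos rfl]
    exact le_max_left _ _
  · intro k
    simp only [fmod, if_pos rfl]
    by_cases hk : k = i
    · subst hk; simp only [if_pos rfl]; right; exact le_refl _
    · simp only [if_neg hk]
      by_cases hs : 0 < sigmaG (b i) (M k j) (b k)
      · simp only [if_pos hs]; left; exact le_refl _
      · simp only [if_neg hs]
        rcases sigmaG_nonpos_cases hs with hc | hc
        · right; exact hc
        · left; exact hc

lemma Pprop_foldl {n m h : ℕ} (b : Fin n → ℝ) (vi : Fin h → Fin n) (vj : Fin h → Fin m)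
    (i : Fin n) :
    ∀ (L : List (Fin h)) (M : Fin n → Fin m → ℝ),
      ((∃ j, Pprop b M i j) ∨ ∃ lam ∈ L, vi lam = i) →
      ∃ j, Pprop b (L.foldl (fun M lam => fmod b M (vi lam) (vj lam)) M) i j := by
  intro L
  induction L with
  | nil =>
    intro M hyp
    rcases hyp with h | ⟨lam, hmem, _⟩
    · simpa using h
    · simp at hmem
  | cons a L ih =>
    intro M hyp
    simp only [List.foldl_cons]
    rcases hyp with ⟨j, hj⟩ | ⟨lam, hmem, hlam⟩
    · exact ih _ (Or.inl ⟨j, Pprop_fmod b M hj _ _⟩)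
    · rcases List.mem_cons.mp hmem with rfl | hmem'
      · subst hlam
        exact ih _ (Or.inl ⟨vj lam, Pprop_fmod_self b M (vi lam) (vj lam)⟩)
      · exact ih _ (Or.inr ⟨lam, hmem', hlam⟩)

theorem stmt17 {n m h : ℕ} [NeZero n] [NeZero m]
    (A : Fin n → Fin m → ℝ) (b : Fin n → ℝ)
    (hA : ∀ i j, A i j ∈ Set.Icc (0:ℝ) 1) (hb : ∀ i, b i ∈ Set.Icc (0:ℝ) 1)
    (vi : Fin h → Fin n) (hinj : Function.Injective vi)
    (hrange : ∀ i : Fin n, (∃ lam, vi lam = i) ↔ 0 < deltaRow b A i)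
    (vj : Fin h → Fin m) :
    IsConsistent (applyMods b A vi vj) b := by
  classical
  set M := applyMods b A vi vj with hMdef
  have hkey : ∀ i, ∃ j, Pprop b M i j := by
    intro i
    apply Pprop_foldl
    by_cases hd : 0 < deltaRow b A i
    · obtain ⟨lam, hlam⟩ := (hrange i).mpr hd
      exact Or.inr ⟨lam, List.mem_finRange lam, hlam⟩
    · left
      push_neg at hd
      obtain ⟨l, -, hEq⟩ := Finset.exists_mem_eq_inf' (Finset.univ_nonempty)
        (fun l : Fin m => deltaE b A i l)
      have hE : deltaE b A i l ≤ 0 := by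
        simp only [deltaRow] at hd
        rw [← hEq]; exact hd
      simp only [deltaE] at hE
      rcases max_le_iff.mp hE with ⟨hE1, hE2⟩
      have hb1 : b i ≤ A i l := by
        have := le_max_left (b i - A i l) (0:ℝ); linarith [max_le_iff.mp hE1]
      refine ⟨l, hb1, fun k => ?_⟩
      have hsk : sigmaG (b i) (A k l) (b k) ≤ 0 :=
        (Finset.sup'_le_iff _ _).mp hE2 k (Finset.mem_univ k)
      exact (sigmaG_nonpos_cases (not_lt.mpr hsk)).symm
  refine ⟨fun j => Finset.univ.inf' Finset.univ_nonempty
      (fun k => if M k j ≤ b k then 1 else b k), ?_, ?_⟩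
  · intro j
    constructor
    · apply Finset.le_inf'
      intro k _
      by_cases hc : M k j ≤ b k
      · simp [hc]
      · simp [hc]; exact (hb k).1
    · obtain ⟨k0, hk0⟩ := (Finset.univ_nonempty : (Finset.univ : Finset (Fin n)).Nonempty)
      refine le_trans (Finset.inf'_le _ hk0) ?_
      by_cases hc : M k0 j ≤ b k0
      · simp [hc]
      · simp [hc]; exact (hb k0).2
  · intro i
    simp only [maxminProd]
    apply le_antisymm
    · apply Finset.sup'_le
      intro j _
      by_cases hij : M i j ≤ b i
      · exact le_trans (min_le_left _ _) hij
      · refine le_trans (min_le_right _ _) ?_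
        refine le_trans (Finset.inf'_le _ (Finset.mem_univ i)) ?_
        simp [hij]
    · obtain ⟨j, hj1, hj2⟩ := hkey i
      refine le_trans ?_ (Finset.le_sup' _ (Finset.mem_univ j))
      refine le_min hj1 ?_
      apply Finset.le_inf'
      intro k _
      by_cases hc : M k j ≤ b k
      · simp [hc]; exact (hb i).2
      · simp [hc]
        rcases hj2 k with hh | hh
        · exact absurd hh hc
        · exact hh
end

section
/- Explicit formula for the minimal L∞ matrix distance: for any A ∈ [0,1]^{n×m} and b ∈ [0,1]^n, inf over T such that T □ x = b is consistent of ‖T − A‖_∞ equals max over i of min over j of max[(b_i − a_{ij})⁺, max over k ≠ i of θ(i,k)·(a_{kj} − b_k)⁺], where θ(i,k) = 1 if b_i > b_k and 0 otherwise. -/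
open Finset

noncomputable def Dfun {n m : ℕ} [NeZero n] (A : Fin n → Fin m → ℝ) (b : Fin n → ℝ)
    (i : Fin n) (j : Fin m) : ℝ :=
  max (max (b i - A i j) 0)
    (Finset.univ.sup' Finset.univ_nonempty (fun k : Fin n =>
      if k ≠ i then (if b i > b k then (1:ℝ) else 0) * max (A k j - b k) 0 else 0))

noncomputable def Rval {n m : ℕ} [NeZero n] [NeZero m] (A : Fin n → Fin m → ℝ)
    (b : Fin n → ℝ) : ℝ :=
  Finset.univ.sup' Finset.univ_nonempty (fun i : Fin n =>
    Finset.univ.inf' Finset.univ_nonempty (fun j : Fin m => Dfun A b i j))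

lemma Dfun_nonneg {n m : ℕ} [NeZero n] (A : Fin n → Fin m → ℝ) (b : Fin n → ℝ)
    (i : Fin n) (j : Fin m) : 0 ≤ Dfun A b i j :=
  le_trans (le_max_right _ _) (le_max_left _ _)

lemma Rval_nonneg {n m : ℕ} [NeZero n] [NeZero m] (A : Fin n → Fin m → ℝ)
    (b : Fin n → ℝ) : 0 ≤ Rval A b := by
  obtain ⟨i0, _⟩ := (Finset.univ_nonempty : (Finset.univ : Finset (Fin n)).Nonempty)
  refine le_trans ?_ (Finset.le_sup' (f := fun i : Fin n =>
    Finset.univ.inf' Finset.univ_nonempty (fun j : Fin m => Dfun A b i j)) (Finset.mem_univ i0))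
  exact Finset.le_inf' _ _ fun j _ => Dfun_nonneg A b i0 j

lemma normInf_abs_le {n m : ℕ} [NeZero n] [NeZero m] (X Y : Fin n → Fin m → ℝ)
    (k : Fin n) (j : Fin m) : |X k j - Y k j| ≤ normInf X Y := by
  unfold normInf
  exact Finset.le_sup' (f := fun p : Fin n × Fin m => |X p.1 p.2 - Y p.1 p.2|)
    (Finset.mem_univ ((k, j) : Fin n × Fin m))

lemma normInf_nonneg {n m : ℕ} [NeZero n] [NeZero m] (X Y : Fin n → Fin m → ℝ) :
    0 ≤ normInf X Y := by
  obtain ⟨k, _⟩ := (Finset.univ_nonempty : (Finset.univ : Finset (Fin n)).Nonempty)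
  obtain ⟨j, _⟩ := (Finset.univ_nonempty : (Finset.univ : Finset (Fin m)).Nonempty)
  exact le_trans (abs_nonneg _) (normInf_abs_le X Y k j)

/-- Lower bound: every consistent matrix is at distance at least `Rval A b` from `A`. -/
lemma Rval_le_normInf {n m : ℕ} [NeZero n] [NeZero m]
    (A : Fin n → Fin m → ℝ) (b : Fin n → ℝ) (hb : ∀ i, b i ∈ Set.Icc (0:ℝ) 1)
    (T : Fin n → Fin m → ℝ) (hT : T ∈ TSet (n := n) (m := m) b) :
    Rval A b ≤ normInf T A := by
  classical
  obtain ⟨hbox, x, hx, hcons⟩ := hT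
  have hd0 : 0 ≤ normInf T A := normInf_nonneg T A
  refine Finset.sup'_le _ _ (fun i _ => ?_)
  have hsi := hcons i
  simp only [maxminProd] at hsi
  obtain ⟨j0, _, hj0⟩ := Finset.exists_mem_eq_sup' (Finset.univ_nonempty)
    (fun j => min (T i j) (x j))
  rw [hj0] at hsi
  have hT0 : b i ≤ T i j0 := hsi.symm.le.trans (min_le_left _ _)
  have hx0 : b i ≤ x j0 := hsi.symm.le.trans (min_le_right _ _)
  refine le_trans (Finset.inf'_le _ (Finset.mem_univ j0)) ?_
  unfold Dfun
  refine max_le (max_le ?_ hd0) (Finset.sup'_le _ _ fun k _ => ?_)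
  · have h1 : T i j0 - A i j0 ≤ normInf T A := (le_abs_self _).trans (normInf_abs_le T A i j0)
    linarith
  · split_ifs with h1 h2
    · rw [one_mul]
      have h3 : min (T k j0) (x j0) ≤ b k := by
        have hle := Finset.le_sup' (fun j => min (T k j) (x j)) (Finset.mem_univ j0)
        have hck := hcons k
        simp only [maxminProd] at hck
        rw [hck] at hle
        exact hle
      have hTk : T k j0 ≤ b k := by
        rcases min_cases (T k j0) (x j0) with ⟨h, _⟩ | ⟨h, _⟩
        · rwa [h] at h3
        · rw [h] at h3; linarith
      have h4 : A k j0 - T k j0 ≤ normInf T A := by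
        have h5 := normInf_abs_le T A k j0
        rw [abs_sub_comm] at h5
        exact (le_abs_self _).trans h5
      exact max_le (by linarith) hd0
    · rw [zero_mul]; exact hd0
    · exact hd0

/-- Upper bound: there is a consistent matrix at distance at most `Rval A b` from `A`. -/
lemma exists_normInf_le_Rval {n m : ℕ} [NeZero n] [NeZero m]
    (A : Fin n → Fin m → ℝ) (b : Fin n → ℝ)
    (hA : ∀ i j, A i j ∈ Set.Icc (0:ℝ) 1) (hb : ∀ i, b i ∈ Set.Icc (0:ℝ) 1) :
    ∃ T ∈ TSet (n := n) (m := m) b, normInf T A ≤ Rval A b := by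
  classical
  choose jsel hjmem hjsel using fun i : Fin n =>
    Finset.exists_mem_eq_inf' (Finset.univ_nonempty) (fun j => Dfun A b i j)
  set T : Fin n → Fin m → ℝ := fun k j =>
    if ∃ i, jsel i = j ∧ b k < b i ∧ b k < A k j then b k
    else if jsel k = j then max (A k j) (b k) else A k j with hTdef
  have hTval : ∀ k j, T k j =
      if ∃ i, jsel i = j ∧ b k < b i ∧ b k < A k j then b k
      else if jsel k = j then max (A k j) (b k) else A k j := fun k j => by rw [hTdef]
  have hDR : ∀ i, Dfun A b i (jsel i) ≤ Rval A b := by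
    intro i
    rw [← hjsel i]
    exact Finset.le_sup' (f := fun i : Fin n =>
      Finset.univ.inf' Finset.univ_nonempty (fun j : Fin m => Dfun A b i j))
      (Finset.mem_univ i)
  -- entries in [0,1]
  have hbox : ∀ k j, T k j ∈ Set.Icc (0:ℝ) 1 := by
    intro k j
    rw [hTval]
    split_ifs with h1 h2
    · exact hb k
    · exact ⟨le_trans (hA k j).1 (le_max_left _ _), max_le (hA k j).2 (hb k).2⟩
    · exact hA k j
  -- key structural facts
  have hL1 : ∀ k, b k ≤ T k (jsel k) := by
    intro k
    rw [hTval]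
    split_ifs with h1 h2
    · exact le_rfl
    · exact le_max_right _ _
    · exact absurd rfl h2
  have hL2 : ∀ i k, b k < b i → T k (jsel i) ≤ b k := by
    intro i k hki
    rw [hTval]
    by_cases h : ∃ i', jsel i' = jsel i ∧ b k < b i' ∧ b k < A k (jsel i)
    · rw [if_pos h]
    · rw [if_neg h]
      have hA2 : A k (jsel i) ≤ b k := by
        by_contra hc
        push_neg at hc
        exact h ⟨i, rfl, hki, hc⟩
      split_ifs with h2
      · exact max_le hA2 le_rfl
      · exact hA2
  -- consistency
  have hcons : IsConsistent T b := by
    refine ⟨fun j => Finset.univ.inf' Finset.univ_nonempty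
      (fun k => if b k < T k j then b k else 1), ?_, ?_⟩
    · intro j
      constructor
      · refine Finset.le_inf' _ _ fun k _ => ?_
        split_ifs
        · exact (hb k).1
        · exact zero_le_one
      · obtain ⟨k0, _⟩ := (Finset.univ_nonempty : (Finset.univ : Finset (Fin n)).Nonempty)
        refine le_trans (Finset.inf'_le _ (Finset.mem_univ k0)) ?_
        split_ifs
        · exact (hb k0).2
        · exact le_rfl
    · intro i
      simp only [maxminProd]
      apply le_antisymm
      · refine Finset.sup'_le _ _ fun j _ => ?_
        by_cases hTij : T i j ≤ b i
        · exact le_trans (min_le_left _ _) hTij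
        · push_neg at hTij
          refine le_trans (min_le_right _ _) ?_
          refine le_trans (Finset.inf'_le _ (Finset.mem_univ i)) ?_
          rw [if_pos hTij]
      · refine le_trans ?_ (Finset.le_sup' (fun j => min (T i j)
          (Finset.univ.inf' Finset.univ_nonempty (fun k => if b k < T k j then b k else 1)))
          (Finset.mem_univ (jsel i)))
        refine le_min (hL1 i) ?_
        refine Finset.le_inf' _ _ fun k _ => ?_
        by_cases hk : b k < b i
        · have := hL2 i k hk
          rw [if_neg (by linarith)]
          exact (hb i).2
        · push_neg at hk
          split_ifs
          · exact hk
          · exact (hb i).2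
  -- cost bound
  have hcost : ∀ k j, |T k j - A k j| ≤ Rval A b := by
    intro k j
    rw [hTval]
    split_ifs with h1 h2
    · obtain ⟨i, hji, hbi, hAkj⟩ := h1
      have h0 : |b k - A k j| = A k j - b k := by
        rw [abs_sub_comm]; exact abs_of_pos (by linarith)
      rw [h0]
      subst hji
      have hki : k ≠ i := fun e => by rw [e] at hbi; exact lt_irrefl _ hbi
      have hterm : A k (jsel i) - b k ≤
          (fun k' : Fin n => if k' ≠ i then (if b i > b k' then (1:ℝ) else 0) *
            max (A k' (jsel i) - b k') 0 else 0) k := by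
        simp only [if_pos hki, if_pos hbi, one_mul]
        exact le_max_left _ _
      refine le_trans hterm (le_trans ?_ (hDR i))
      exact le_trans (Finset.le_sup' (fun k' : Fin n => if k' ≠ i then
        (if b i > b k' then (1:ℝ) else 0) * max (A k' (jsel i) - b k') 0 else 0)
        (Finset.mem_univ k)) (le_max_right _ _)
    · have h0 : |max (A k j) (b k) - A k j| = max (b k - A k j) 0 := by
        rcases le_total (b k) (A k j) with h | h
        · rw [max_eq_left h, sub_self, abs_zero, max_eq_right (by linarith)]
        · rw [max_eq_right h, max_eq_left (by linarith), abs_of_nonneg (by linarith)]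
      rw [h0]
      have hD' : max (b k - A k j) 0 ≤ Dfun A b k j := le_max_left _ _
      refine le_trans hD' ?_
      rw [← h2]
      exact hDR k
    · rw [sub_self, abs_zero]
      exact Rval_nonneg A b
  refine ⟨T, ⟨hbox, hcons⟩, ?_⟩
  unfold normInf
  exact Finset.sup'_le _ _ fun p _ => hcost p.1 p.2

theorem stmt19 {n m : ℕ} [NeZero n] [NeZero m]
    (A : Fin n → Fin m → ℝ) (b : Fin n → ℝ)
    (hA : ∀ i j, A i j ∈ Set.Icc (0:ℝ) 1) (hb : ∀ i, b i ∈ Set.Icc (0:ℝ) 1) :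
    sInf ((fun T => normInf T A) '' TSet (n := n) (m := m) b) =
      Finset.univ.sup' Finset.univ_nonempty (fun i : Fin n =>
        Finset.univ.inf' Finset.univ_nonempty (fun j : Fin m =>
          max (max (b i - A i j) 0)
            (Finset.univ.sup' Finset.univ_nonempty (fun k : Fin n =>
              if k ≠ i then (if b i > b k then (1:ℝ) else 0) * max (A k j - b k) 0
              else 0)))) := by
  classical
  have hgoal : (Finset.univ.sup' Finset.univ_nonempty (fun i : Fin n =>
      Finset.univ.inf' Finset.univ_nonempty (fun j : Fin m =>
        max (max (b i - A i j) 0)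
          (Finset.univ.sup' Finset.univ_nonempty (fun k : Fin n =>
            if k ≠ i then (if b i > b k then (1:ℝ) else 0) * max (A k j - b k) 0
            else 0))))) = Rval A b := rfl
  rw [hgoal]
  obtain ⟨T, hTmem, hTle⟩ := exists_normInf_le_Rval A b hA hb
  have hbdd : BddBelow ((fun T => normInf T A) '' TSet (n := n) (m := m) b) := by
    refine ⟨0, fun y hy => ?_⟩
    obtain ⟨S, _, rfl⟩ := hy
    exact normInf_nonneg S A
  apply le_antisymm
  · exact le_trans (csInf_le hbdd (Set.mem_image_of_mem _ hTmem)) hTle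
  · exact le_csInf ⟨normInf T A, Set.mem_image_of_mem _ hTmem⟩
      (fun y hy => by obtain ⟨S, hS, rfl⟩ := hy; exact Rval_le_normInf A b hb S hS)
end
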